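/- In the extended word x̄ = (x)(m-1)(x-1)(m-2)...(x-m+1)(0) of a word x of length k over Z/mZ, there are exactly k+1 occurrences of the letter 0, and these occur in distinct positions modulo k+1 (one in each residue class of positions mod k+1). -/

import Mathlib

/-- The extended word `x̄ = (x)(m-1)(x-1)(m-2)⋯(x-m+1)(0)` of a word `x` of length
`k` over `ℤ/mℤ`: the concatenation of the blocks `(x - i)(m-1-i)` for `i = 0,…,m-1`. -/
def extWord (m k : ℕ) (x : Fin k → ZMod m) : List (ZMod m) :=
  (List.range m).flatMap
    (fun (i : ℕ) => (List.ofFn x).map (fun a => a - (i : ZMod m)) ++ [((m - 1 - i : ℕ) : ZMod m)])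

/-!
Write a position of `x̄` as `(k + 1) * q + r` with block `q < m` and offset `r ≤ k`. The letter
there is `x r - q` for `r < k` and `m - 1 - q` for `r = k`, so for each offset it vanishes in
exactly one block: `q = x r`, resp. `q = m - 1`. Thus the zeros of `x̄` sit at exactly one
position in each residue class modulo `k + 1`, and there are `k + 1` of them.
-/

namespace List

variable {α : Type*}

theorem length_flatMap_range_of_length_eq {f : ℕ → List α} {n : ℕ}
    (hf : ∀ i, (f i).length = n) (m : ℕ) : ((range m).flatMap f).length = n * m := by
  simp [length_flatMap, hf, mul_comm]

theorem getD_flatMap_range_mul_add {f : ℕ → List α} {n : ℕ} (hf : ∀ i, (f i).length = n)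
    {m q r : ℕ} (hq : q < m) (hr : r < n) (d : α) :
    ((range m).flatMap f).getD (n * q + r) d = (f q).getD r d := by
  induction m with
  | zero => omega
  | succ m ih =>
    rw [range_succ, flatMap_append]
    rcases Nat.lt_succ_iff_lt_or_eq.mp hq with hq | rfl
    · rw [getD_append _ _ _ _ (by rw [length_flatMap_range_of_length_eq hf]; nlinarith), ih hq]
    · rw [getD_append_right _ _ _ _ (by rw [length_flatMap_range_of_length_eq hf]; omega),
        length_flatMap_range_of_length_eq hf]
      simp

theorem map_getD_range (L : List α) (d : α) : (range L.length).map (L.getD · d) = L :=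
  ext_getElem (by simp) fun _ _ h => by simp [h]

theorem count_eq_card_filter_getD [DecidableEq α] (L : List α) (a d : α) :
    L.count a = ((Finset.range L.length).filter (L.getD · d = a)).card := by
  conv_lhs => rw [← L.map_getD_range d]
  rw [← Multiset.coe_count, ← Multiset.map_coe, Multiset.count_map, Finset.card_def,
    Finset.filter_val, Finset.range_val, Multiset.range]
  simp only [eq_comm]

end List

namespace Nat

variable {n m : ℕ} {g : ℕ → ℕ} {P : ℕ → Prop}

theorem mul_add_spec_of_iff_div_eq (hP : ∀ j < n * m, P j ↔ j / n = g (j % n))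
    (hg : ∀ r < n, g r < m) {r : ℕ} (hr : r < n) :
    n * g r + r < n * m ∧ P (n * g r + r) ∧ (n * g r + r) % n = r := by
  have hmod : (n * g r + r) % n = r := by simp [Nat.mod_eq_of_lt hr]
  have hlt : n * g r + r < n * m := mul_comm m n ▸ mul_add_lt_mul_of_lt_of_lt (hg r hr) hr
  refine ⟨hlt, (hP _ hlt).mpr ?_, hmod⟩
  rw [hmod, Nat.mul_add_div (by omega), Nat.div_eq_of_lt hr, add_zero]

theorem eq_mul_add_of_iff_div_eq (hP : ∀ j < n * m, P j ↔ j / n = g (j % n)) {j : ℕ}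
    (hj : j < n * m) (hPj : P j) : j = n * g (j % n) + j % n := by
  rw [← (hP j hj).mp hPj, Nat.div_add_mod]

theorem existsUnique_mod_eq_of_iff_div_eq (hP : ∀ j < n * m, P j ↔ j / n = g (j % n))
    (hg : ∀ r < n, g r < m) {r : ℕ} (hr : r < n) : ∃! j, j < n * m ∧ P j ∧ j % n = r := by
  refine ⟨n * g r + r, mul_add_spec_of_iff_div_eq hP hg hr, ?_⟩
  rintro j ⟨hj, hPj, rfl⟩
  exact eq_mul_add_of_iff_div_eq hP hj hPj

theorem card_filter_of_iff_div_eq [DecidablePred P] (hP : ∀ j < n * m, P j ↔ j / n = g (j % n))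
    (hg : ∀ r < n, g r < m) : ((Finset.range (n * m)).filter P).card = n := by
  refine (Finset.card_nbij' (· % n) (fun r => n * g r + r) ?_ ?_ ?_ ?_).trans (Finset.card_range n)
    <;> intro j hj
    <;> simp only [Finset.coe_filter, Finset.coe_range, Finset.mem_range, Set.mem_ofPred_eq,
      Set.mem_Iio] at hj ⊢
  · exact Nat.mod_lt j (Nat.pos_of_mul_pos_right (by omega : 0 < n * m))
  · obtain ⟨hlt, hPj, -⟩ := mul_add_spec_of_iff_div_eq hP hg hj
    exact ⟨hlt, hPj⟩
  · exact (eq_mul_add_of_iff_div_eq hP hj.1 hj.2).symm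
  · exact (mul_add_spec_of_iff_div_eq hP hg hj).2.2

end Nat

theorem ZMod.natCast_eq_iff_of_lt {m q : ℕ} (hq : q < m) (a : ZMod m) :
    (q : ZMod m) = a ↔ q = a.val := by
  have : NeZero m := NeZero.of_pos (by omega)
  rw [← (ZMod.val_injective m).eq_iff, ZMod.val_cast_of_lt hq]

section ExtWord

variable {m k : ℕ} (x : Fin k → ZMod m)

theorem length_extWord : (extWord m k x).length = (k + 1) * m :=
  List.length_flatMap_range_of_length_eq (by simp) m

theorem extWord_getD {q r : ℕ} (hq : q < m) (hr : r < k + 1) :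
    (extWord m k x).getD ((k + 1) * q + r) 0 =
      if h : r < k then x ⟨r, h⟩ - q else ((m - 1 - q : ℕ) : ZMod m) := by
  rw [extWord, List.getD_flatMap_range_mul_add (by simp) hq hr]
  split_ifs with h
  · rw [List.getD_append _ _ _ _ (by simpa using h)]
    simp [h]
  · obtain rfl : r = k := by omega
    rw [List.getD_append_right _ _ _ _ (by simp)]
    simp

def zeroBlock (r : ℕ) : ℕ := if h : r < k then (x ⟨r, h⟩).val else m - 1

theorem zeroBlock_lt (hm : 1 ≤ m) (r : ℕ) : zeroBlock x r < m := by
  have : NeZero m := NeZero.of_pos hm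
  unfold zeroBlock
  split_ifs
  · exact ZMod.val_lt _
  · omega

theorem extWord_getD_eq_zero_iff {j : ℕ} (hj : j < (k + 1) * m) :
    (extWord m k x).getD j 0 = 0 ↔ j / (k + 1) = zeroBlock x (j % (k + 1)) := by
  have hq : j / (k + 1) < m := Nat.div_lt_of_lt_mul hj
  have hr : j % (k + 1) < k + 1 := Nat.mod_lt j k.succ_pos
  conv_lhs => rw [← Nat.div_add_mod j (k + 1)]
  rw [extWord_getD x hq hr, zeroBlock]
  generalize j / (k + 1) = q at hq ⊢
  split_ifs
  · rw [sub_eq_zero, eq_comm, ZMod.natCast_eq_iff_of_lt hq]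
  · rw [ZMod.natCast_eq_iff_of_lt (by omega), ZMod.val_zero]
    omega

end ExtWord

/-- The extended word of `x` contains exactly `k+1` zeros, one in each residue class
of positions modulo `k+1`. -/
theorem extWord_zeros (m k : ℕ) (hm : 1 ≤ m) (x : Fin k → ZMod m) :
    (extWord m k x).count 0 = k + 1 ∧
      ∀ r, r < k + 1 →
        ∃! j, j < (k + 1) * m ∧ (extWord m k x).getD j 0 = 0 ∧ j % (k + 1) = r := by
  have hzero : ∀ j < (k + 1) * m,
      (extWord m k x).getD j 0 = 0 ↔ j / (k + 1) = zeroBlock x (j % (k + 1)) :=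
    fun j hj => extWord_getD_eq_zero_iff x hj
  have hlt : ∀ r < k + 1, zeroBlock x r < m := fun r _ => zeroBlock_lt x hm r
  refine ⟨?_, fun r hr => Nat.existsUnique_mod_eq_of_iff_div_eq hzero hlt hr⟩
  rw [List.count_eq_card_filter_getD _ _ 0, length_extWord]
  exact Nat.card_filter_of_iff_div_eq hzero hlt
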